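/- arXiv:1010.0602 — 2 statements merged into one kernel-verified Lean document; each statement's English description precedes it below -/
import Mathlib

section
/- Suppose f is a characteristic function such that for every c in some left neighborhood (a,1) of 1 (with 0 < a < 1) the function f_c(t) = f(t)/f(ct) is a characteristic function. Then f is self-decomposable, i.e., f_c is a characteristic function for every c ∈ (0,1). -/
/-!
First, `f` has no zeros. If `f t = 0 ≠ f (t / 2)`, every `f_c` with `c` near `1` vanishes at `t`,
so the inequality `1 - Re φ (2s) ≤ 4 (1 - Re φ s)` for characteristic functions gives
`Re f_c (t / 2) ≤ 3 / 4`, whereas `f_c (t / 2) → 1` as `c → 1`. Since `f (t / 2 ^ n) → 1`,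
halving always reaches such a situation. Without zeros, `f_{c₁c₂} (t) = f_{c₁} (t) f_{c₂} (c₁ t)`
is a product of characteristic functions, and every `c ∈ (0, 1)` is `b ^ n` with `b = c ^ (1 / n)`
in the given neighbourhood of `1`.
-/

open MeasureTheory Set Filter

/-- `f` is the characteristic function of a probability measure on `ℝ`. -/
def IsCF (f : ℝ → ℂ) : Prop :=
  ∃ μ : Measure ℝ, IsProbabilityMeasure μ ∧
    ∀ t : ℝ, f t = ∫ x, Complex.exp (Complex.I * t * x) ∂μ

/-- `P` is the probability generating function of a distribution on `ℕ`. -/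
def IsPGF (P : ℝ → ℝ) : Prop :=
  ∃ q : ℕ → ℝ, (∀ n, 0 ≤ q n) ∧ (∑' n, q n) = 1 ∧
    ∀ s ∈ Set.Icc (0:ℝ) 1, P s = ∑' n, q n * s ^ n

/-- `φ` is the Laplace transform of a probability measure on `[0,∞)`. -/
def IsLT (φ : ℝ → ℝ) : Prop :=
  ∃ μ : Measure ℝ, IsProbabilityMeasure μ ∧ μ (Set.Iio 0) = 0 ∧
    ∀ s : ℝ, 0 ≤ s → φ s = ∫ x, Real.exp (-s * x) ∂μ

open Topology

lemma isCF_iff {f : ℝ → ℂ} :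
    IsCF f ↔ ∃ μ : Measure ℝ, IsProbabilityMeasure μ ∧ f = charFun μ := by
  simp only [IsCF, funext_iff, charFun_apply_real, mul_comm Complex.I, mul_right_comm _ Complex.I]

lemma re_charFun_eq_integral_cos (μ : Measure ℝ) [IsFiniteMeasure μ] (t : ℝ) :
    (charFun μ t).re = ∫ x, Real.cos (t * x) ∂μ := by
  have hint : Integrable (fun x : ℝ => Complex.exp (t * x * Complex.I)) μ :=
    Integrable.of_bound (by fun_prop) 1
      (by simp [← Complex.ofReal_mul, Complex.norm_exp_ofReal_mul_I])
  rw [charFun_apply_real, ← RCLike.re_to_complex, ← integral_re hint]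
  simp [← Complex.ofReal_mul, Complex.exp_ofReal_mul_I_re]

lemma one_sub_re_charFun_two_mul_le (μ : Measure ℝ) [IsProbabilityMeasure μ] (t : ℝ) :
    1 - (charFun μ (2 * t)).re ≤ 4 * (1 - (charFun μ t).re) := by
  have hcos (s : ℝ) : Integrable (fun x => Real.cos (s * x)) μ :=
    Integrable.of_bound (by fun_prop) 1 (by simp [Real.abs_cos_le_one])
  have hint (s : ℝ) : 1 - (charFun μ s).re = ∫ x, (1 - Real.cos (s * x)) ∂μ := by
    rw [re_charFun_eq_integral_cos, integral_sub (integrable_const 1) (hcos s)]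
    simp
  rw [hint, hint, ← integral_const_mul]
  refine integral_mono ((integrable_const 1).sub (hcos _))
    (((integrable_const 1).sub (hcos t)).const_mul 4) fun x => ?_
  -- `1 - cos 2θ = 2 (1 - cos θ) (1 + cos θ)`
  rw [mul_assoc, Real.cos_two_mul]
  nlinarith [Real.cos_le_one (t * x), Real.neg_one_le_cos (t * x)]

namespace IsCF

variable {f g : ℝ → ℂ}

lemma apply_zero (hf : IsCF f) : f 0 = 1 := by
  obtain ⟨μ, _, rfl⟩ := isCF_iff.1 hf
  simp

lemma continuous (hf : IsCF f) : Continuous f := by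
  obtain ⟨μ, _, rfl⟩ := isCF_iff.1 hf
  exact continuous_charFun

lemma one_sub_re_two_mul_le (hf : IsCF f) (t : ℝ) : 1 - (f (2 * t)).re ≤ 4 * (1 - (f t).re) := by
  obtain ⟨μ, _, rfl⟩ := isCF_iff.1 hf
  exact one_sub_re_charFun_two_mul_le μ t

lemma mul (hf : IsCF f) (hg : IsCF g) : IsCF (fun t => f t * g t) := by
  obtain ⟨μ, _, rfl⟩ := isCF_iff.1 hf
  obtain ⟨ν, _, rfl⟩ := isCF_iff.1 hg
  exact isCF_iff.2 ⟨μ ∗ ν, inferInstance, funext fun t => (charFun_conv t).symm⟩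

lemma comp_mul (hf : IsCF f) (b : ℝ) : IsCF (fun t => f (b * t)) := by
  obtain ⟨μ, _, rfl⟩ := isCF_iff.1 hf
  exact isCF_iff.2 ⟨μ.map (b * ·), Measure.isProbabilityMeasure_map (by fun_prop),
    funext fun t => (charFun_map_mul b t).symm⟩

end IsCF

/-- The paper's `f_c`. -/
noncomputable def sdFactor (f : ℝ → ℂ) (c : ℝ) : ℝ → ℂ := fun t => f t / f (c * t)

lemma IsCF.apply_ne_zero_of_apply_half_ne_zero {f : ℝ → ℂ} (hf : IsCF f)
    (h : ∀ᶠ c in 𝓝[<] 1, IsCF (sdFactor f c)) {t : ℝ} (ht : f (t / 2) ≠ 0) : f t ≠ 0 := by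
  intro hzero
  have hle : ∀ᶠ c in 𝓝[<] 1, (sdFactor f c (t / 2)).re ≤ 3 / 4 := h.mono fun c hc => by
    have := hc.one_sub_re_two_mul_le (t / 2)
    rw [mul_div_cancel₀ t two_ne_zero, sdFactor, hzero, zero_div, Complex.zero_re] at this
    linarith
  have hlim : Tendsto (fun c => (sdFactor f c (t / 2)).re) (𝓝[<] 1) (𝓝 1) := by
    have hcont : ContinuousAt (fun c => sdFactor f c (t / 2)) 1 :=
      continuousAt_const.div (hf.continuous.continuousAt.comp (by fun_prop)) (by simpa using ht)
    simpa [Function.comp_def, sdFactor, ht] using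
      (Complex.continuous_re.continuousAt.tendsto.comp hcont.tendsto).mono_left nhdsWithin_le_nhds
  linarith [le_of_tendsto hlim hle]

lemma IsCF.apply_ne_zero {f : ℝ → ℂ} (hf : IsCF f) (h : ∀ᶠ c in 𝓝[<] 1, IsCF (sdFactor f c))
    (t : ℝ) : f t ≠ 0 := by
  have hdown (n : ℕ) : f (t / 2 ^ n) ≠ 0 → f t ≠ 0 := by
    induction n with
    | zero => simp
    | succ n ih =>
      intro hn
      refine ih (hf.apply_ne_zero_of_apply_half_ne_zero h ?_)
      rwa [div_div, ← pow_succ]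
  have hsmall : Tendsto (fun n : ℕ => f (t / 2 ^ n)) atTop (𝓝 1) := by
    have := tendsto_const_nhds (x := t).div_atTop (tendsto_pow_atTop_atTop_of_one_lt one_lt_two)
    simpa [Function.comp_def, hf.apply_zero] using (hf.continuous.tendsto 0).comp this
  obtain ⟨n, hn⟩ := (hsmall.eventually_ne one_ne_zero).exists
  exact hdown n hn

lemma isCF_sdFactor_mul {f : ℝ → ℂ} (hf : ∀ t, f t ≠ 0) {c₁ c₂ : ℝ} (h₁ : IsCF (sdFactor f c₁))
    (h₂ : IsCF (sdFactor f c₂)) : IsCF (sdFactor f (c₁ * c₂)) := by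
  have hprod : sdFactor f (c₁ * c₂) = fun t => sdFactor f c₁ t * sdFactor f c₂ (c₁ * t) := by
    ext t
    simp only [sdFactor, div_mul_div_cancel₀ (hf (c₁ * t)), mul_comm c₂, mul_assoc]
  rw [hprod]
  exact h₁.mul (h₂.comp_mul c₁)

lemma isCF_sdFactor_pow {f : ℝ → ℂ} (hf : ∀ t, f t ≠ 0) {b : ℝ} (hb : IsCF (sdFactor f b))
    {n : ℕ} (hn : 1 ≤ n) : IsCF (sdFactor f (b ^ n)) := by
  induction n, hn using Nat.le_induction with
  | base => simpa using hb
  | succ n _ ih => simpa [pow_succ] using isCF_sdFactor_mul hf ih hb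

lemma tendsto_rpow_inv_natCast_nhdsLT_one {c : ℝ} (hc : c ∈ Ioo (0 : ℝ) 1) :
    Tendsto (fun n : ℕ => c ^ (n⁻¹ : ℝ)) atTop (𝓝[<] 1) := by
  refine tendsto_nhdsWithin_iff.2 ⟨?_, ?_⟩
  · simpa [Function.comp_def] using ((Real.continuousAt_const_rpow hc.1.ne').tendsto).comp
      tendsto_inv_atTop_nhds_zero_nat
  · filter_upwards [eventually_gt_atTop 0] with n hn
    exact Real.rpow_lt_one hc.1.le hc.2 (by positivity)

/-- SD need only be checked on a left neighbourhood of 1. -/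
theorem sd_from_left_neighbourhood (f : ℝ → ℂ) (a : ℝ) (ha : a ∈ Set.Ioo (0:ℝ) 1)
    (hf : IsCF f)
    (h : ∀ c ∈ Set.Ioo a 1, IsCF (fun t => f t / f (c * t))) :
    ∀ c ∈ Set.Ioo (0:ℝ) 1, IsCF (fun t => f t / f (c * t)) := by
  intro c hc
  have hnear : ∀ᶠ c in 𝓝[<] 1, IsCF (sdFactor f c) := eventually_of_mem (Ioo_mem_nhdsLT ha.2) h
  have hne := hf.apply_ne_zero hnear
  obtain ⟨n, hroot, hn⟩ :=
    (((tendsto_rpow_inv_natCast_nhdsLT_one hc).eventually hnear).and (eventually_ge_atTop 1)).exists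
  have := isCF_sdFactor_pow hne hroot hn
  rwa [Real.rpow_inv_natCast_pow hc.1.le (by omega)] at this
end

section
/- Let φ(s) = (1+s)^{-1/k} for a positive integer k, and p ∈ (0,1). Then P(s) = φ(φ⁻¹(s)/p) = s / (a - (a-1)s^k)^{1/k} with a = 1/p is a probability generating function (the Harris(a,k) distribution), i.e., its Maclaurin coefficients are nonnegative and sum to 1. -/
open MeasureTheory Set Filter

/-!
Writing `r = 1/k` and `x = (1 - p) s^k`, the function is `p^r · s · (1 - x)^(-r)`. The binomial
series `(1 - x)^(-r) = ∑ₘ C(r + m - 1, m) xᵐ` has positive coefficients for `r > 0`, so expanding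
in `s` puts the mass `p^r (1 - p)^m C(r + m - 1, m)` on `1 + k m`. The masses sum to the value
at `s = 1`, which is `1`.
-/

open Function

theorem Ring.choose_add_sub_one_pos {a : ℝ} (ha : 0 < a) (n : ℕ) :
    0 < Ring.choose (a + n - 1) n := by
  rw [Ring.choose_eq_smul, Polynomial.descPochhammer_smeval_eq_ascPochhammer,
    Polynomial.ascPochhammer_smeval_eq_eval, show a + n - 1 - n + 1 = a by ring, smul_eq_mul]
  exact mul_pos (by positivity) (ascPochhammer_pos n a ha)

theorem Real.hasSum_choose_add_sub_one_mul_pow {a x : ℝ} (hx : |x| < 1) :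
    HasSum (fun n : ℕ => Ring.choose (a + n - 1) n * x ^ n) ((1 - x) ^ a)⁻¹ := by
  have h := (Real.one_div_one_sub_rpow_hasFPowerSeriesOnBall_zero a).hasSum
    (y := x) (by simpa [enorm_eq_nnnorm, ← NNReal.coe_lt_coe] using hx)
  simpa [FormalMultilinearSeries.ofScalars_apply_eq, mul_comm] using h

theorem HasSum.extend_mul_pow {R : Type*} [CommSemiring R] [TopologicalSpace R]
    [IsTopologicalSemiring R] {k : ℕ} (hk : 0 < k) {c : ℕ → R} {s A : R}
    (h : HasSum (fun m => c m * (s ^ k) ^ m) A) :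
    HasSum (fun n => extend (fun m => k * m + 1) c 0 n * s ^ n) (s * A) := by
  have hinj : Injective (fun m : ℕ => k * m + 1) := fun a b hab => by
    simpa [hk.ne'] using hab
  rw [← hasSum_extend_zero hinj] at h
  refine (h.mul_left s).congr_fun fun n => ?_
  by_cases hn : ∃ m, k * m + 1 = n
  · obtain ⟨m, rfl⟩ := hn
    simp only [hinj.extend_apply]
    ring
  · simp [extend_apply' _ _ _ hn]

noncomputable def harrisMass (k : ℕ) (p : ℝ) : ℕ → ℝ :=
  extend (fun m => k * m + 1)
    (fun m => p ^ ((1 : ℝ) / k) * ((1 - p) ^ m * Ring.choose ((1 : ℝ) / k + m - 1) m)) 0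

theorem harrisMass_nonneg {k : ℕ} (hk : 0 < k) {p : ℝ} (hp0 : 0 < p) (hp1 : p ≤ 1) :
    0 ≤ harrisMass k p :=
  extend_nonneg (fun m => by
    have := Ring.choose_add_sub_one_pos (a := (1 : ℝ) / k) (by positivity) m
    have : 0 ≤ 1 - p := by linarith
    positivity) le_rfl

theorem hasSum_harrisMass_mul_pow {k : ℕ} (hk : 0 < k) {p : ℝ} (hp0 : 0 < p) (hp1 : p ≤ 1)
    {s : ℝ} (hs : s ∈ Icc (0 : ℝ) 1) :
    HasSum (fun n => harrisMass k p n * s ^ n)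
      (s / (1 / p - (1 / p - 1) * s ^ k) ^ ((1 : ℝ) / k)) := by
  set x := (1 - p) * s ^ k
  have hsk : s ^ k ≤ 1 := pow_le_one₀ hs.1 hs.2
  have hx0 : 0 ≤ x := mul_nonneg (by linarith) (pow_nonneg hs.1 k)
  have hx1 : x < 1 := by nlinarith
  have hseries : HasSum (fun m : ℕ => p ^ ((1 : ℝ) / k) *
      ((1 - p) ^ m * Ring.choose ((1 : ℝ) / k + m - 1) m) * (s ^ k) ^ m)
      (p ^ ((1 : ℝ) / k) / (1 - x) ^ ((1 : ℝ) / k)) := by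
    rw [div_eq_mul_inv]
    refine ((Real.hasSum_choose_add_sub_one_mul_pow (abs_lt.2 ⟨by linarith, hx1⟩)).mul_left
      _).congr_fun fun m => ?_
    rw [mul_pow]
    ring
  have hbase : 1 / p - (1 / p - 1) * s ^ k = (1 - x) / p := by
    field_simp
    ring
  rw [hbase, Real.div_rpow (by linarith) hp0.le, div_div_eq_mul_div, mul_div_assoc]
  exact hseries.extend_mul_pow hk

/-- s/(a - (a-1)s^k)^(1/k) with a = 1/p is the Harris(a,k) PGF. -/
theorem harris_is_pgf (k : ℕ) (hk : 0 < k) (p : ℝ) (hp : p ∈ Set.Ioo (0:ℝ) 1) :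
    IsPGF (fun s => s / (1 / p - (1 / p - 1) * s ^ k) ^ ((1 : ℝ) / k)) := by
  obtain ⟨hp0, hp1⟩ := hp
  have hP := fun s (hs : s ∈ Icc (0 : ℝ) 1) => hasSum_harrisMass_mul_pow hk hp0 hp1.le hs
  refine ⟨harrisMass k p, harrisMass_nonneg hk hp0 hp1.le, ?_, fun s hs => (hP s hs).tsum_eq.symm⟩
  simpa using (hP 1 (right_mem_Icc.2 zero_le_one)).tsum_eq
end
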